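/- arXiv:1807.01432 — 2 statements merged into one kernel-verified Lean document; each statement's English description precedes it below -/
import Mathlib

section
/- Let K ≥ 2 and M, N > 0 with M/N ∈ (1, K). Let Ψ be the nonempty subsets of [K] and f ∈ ℝ₊^Ψ be nonzero. Define τ_u = max over constraints of D̄₂ (the region D₂ with indicator functions removed) evaluated at f, and τ_l = max{ (∑_{A∈Ψ} f(A))/M, max_i (∑_{A ∋ i} f(A))/N }. Then τ_u / τ_l ≤ M/N. -/
/-!
Every constraint of `D̄₂` other than the cut-set ones is dominated by `|A| · F_tot`, because
`d(A) + ∑_{B ⊋ A} d(B)` is part of the total sum. Its normalised value is therefore at most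
`F_tot / N = (M / N) · (F_tot / M) ≤ (M / N) · τ_l`, while the cut-set constraints are bounded by
`τ_l` itself.
-/

open Finset

theorem add_sum_filter_ssuperset_le_sum_filter_nonempty {α β : Type*} [Fintype α]
    [DecidableEq α] [AddCommMonoid β] [PartialOrder β] [IsOrderedAddMonoid β]
    {f : Finset α → β} (hf : ∀ B, 0 ≤ f B) {A : Finset α} (hA : A.Nonempty) :
    f A + ∑ B ∈ univ.powerset.filter (fun B => A ⊂ B), f B ≤
      ∑ B ∈ univ.powerset.filter (fun B : Finset α => B.Nonempty), f B := by
  have hA_notMem : A ∉ univ.powerset.filter (fun B => A ⊂ B) := by simp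
  rw [← sum_insert hA_notMem]
  refine sum_le_sum_of_subset_of_nonneg ?_ fun B _ _ => hf B
  intro B hB
  simp only [mem_insert, mem_filter, mem_powerset] at hB ⊢
  rcases hB with rfl | ⟨-, hAB⟩
  · exact ⟨subset_univ _, hA⟩
  · exact ⟨subset_univ _, hA.mono hAB.subset⟩

theorem sub_one_mul_add_div_mul_le_div {c N F x : ℝ} (hc : 0 < c) (hN : 0 ≤ N) (hx : x ≤ F) :
    ((c - 1) * F + x) / (c * N) ≤ F / N :=
  calc ((c - 1) * F + x) / (c * N) ≤ c * F / (c * N) := by gcongr; linarith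
    _ = F / N := mul_div_mul_left _ _ hc.ne'

theorem ndt_multiplicative_gap_general (K : ℕ) (M N : ℝ)
    (hN : 0 < N) (h1 : N < M)
    (f : Finset (Fin K) → ℝ) (hf : ∀ A, 0 ≤ f A)
    (hf0 : ∃ A : Finset (Fin K), A.Nonempty ∧ 0 < f A)
    (Ftot : ℝ)
    (hFtot : Ftot = ∑ A ∈ Finset.univ.powerset.filter
      (fun A : Finset (Fin K) => A.Nonempty), f A)
    (τl τu : ℝ)
    (hτl : IsGreatest {r : ℝ | r = Ftot / M ∨ ∃ i : Fin K,
      r = (∑ A ∈ Finset.univ.powerset.filter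
        (fun A : Finset (Fin K) => i ∈ A), f A) / N} τl)
    (hτu : IsGreatest {r : ℝ |
      (∃ i : Fin K, r = (∑ A ∈ Finset.univ.powerset.filter
        (fun A : Finset (Fin K) => i ∈ A), f A) / N) ∨
      r = Ftot / M ∨
      (∃ A : Finset (Fin K), 2 ≤ A.card ∧
        r = (((A.card : ℝ) - 1) * Ftot + f A +
          ∑ B ∈ Finset.univ.powerset.filter
            (fun B : Finset (Fin K) => A ⊂ B), f B) / ((A.card : ℝ) * N))} τu) :
    τu / τl ≤ M / N := by
  obtain ⟨A₀, hA₀, hfA₀⟩ := hf0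
  have hM : 0 < M := hN.trans h1
  have hFtot_pos : 0 < Ftot :=
    hFtot ▸ sum_pos' (fun A _ => hf A) ⟨A₀, by simpa using hA₀, hfA₀⟩
  have hFtot_le : Ftot / M ≤ τl := hτl.2 (Or.inl rfl)
  have hτl_pos : 0 < τl := (div_pos hFtot_pos hM).trans_le hFtot_le
  have hτl_le : τl ≤ M / N * τl :=
    le_mul_of_one_le_left hτl_pos.le ((one_le_div hN).2 h1.le)
  rw [div_le_iff₀ hτl_pos]
  rcases hτu.1 with ⟨i, rfl⟩ | rfl | ⟨A, hA, rfl⟩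
  · exact (hτl.2 (Or.inr ⟨i, rfl⟩)).trans hτl_le
  · exact hFtot_le.trans hτl_le
  · have hA_pos : (0 : ℝ) < A.card := by exact_mod_cast (by omega : 0 < A.card)
    have hA_ne : A.Nonempty := card_pos.mp (by omega)
    calc _ = (((A.card : ℝ) - 1) * Ftot + (f A + ∑ B ∈ univ.powerset.filter (A ⊂ ·), f B)) /
          (A.card * N) := by rw [add_assoc]
      _ ≤ Ftot / N := sub_one_mul_add_div_mul_le_div hA_pos hN.le
          (hFtot ▸ add_sum_filter_ssuperset_le_sum_filter_nonempty hf hA_ne)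
      _ = M / N * (Ftot / M) := by field_simp
      _ ≤ M / N * τl := by gcongr

theorem ndt_multiplicative_gap (K : ℕ) (hK : 2 ≤ K) (M N : ℝ)
    (hN : 0 < N) (h1 : N < M) (h2 : M < K * N)
    (f : Finset (Fin K) → ℝ) (hf : ∀ A, 0 ≤ f A)
    (hf0 : ∃ A : Finset (Fin K), A.Nonempty ∧ 0 < f A)
    (Ftot : ℝ)
    (hFtot : Ftot = ∑ A ∈ Finset.univ.powerset.filter
      (fun A : Finset (Fin K) => A.Nonempty), f A)
    (τl τu : ℝ)
    (hτl : IsGreatest {r : ℝ | r = Ftot / M ∨ ∃ i : Fin K,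
      r = (∑ A ∈ Finset.univ.powerset.filter
        (fun A : Finset (Fin K) => i ∈ A), f A) / N} τl)
    (hτu : IsGreatest {r : ℝ |
      (∃ i : Fin K, r = (∑ A ∈ Finset.univ.powerset.filter
        (fun A : Finset (Fin K) => i ∈ A), f A) / N) ∨
      r = Ftot / M ∨
      (∃ A : Finset (Fin K), 2 ≤ A.card ∧
        r = (((A.card : ℝ) - 1) * Ftot + f A +
          ∑ B ∈ Finset.univ.powerset.filter
            (fun B : Finset (Fin K) => A ⊂ B), f B) / ((A.card : ℝ) * N))} τu) :
    τu / τl ≤ M / N :=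
  ndt_multiplicative_gap_general K M N hN h1 f hf hf0 Ftot hFtot τl τu hτl hτu
end

section
/- Let K ≥ 3, let μ = t/K for an integer t with 1 ≤ t ≤ K−2, and suppose the antenna configuration satisfies N = 1 and M an integer with K ≥ M > ⌊K(t+1)C(K−1,t)/(1 + t·C(K,t+1))⌋ − t. Then the quantity τ_worst = min{ K(1−μ)/M·(1/K)·K, (1−μ)/(t+1)·[1/C(K−1,t) + K·t/(t+1)] } from Corollary 1 is strictly greater than τ'_worst = (1−μ)/min{1, (t+M)/K} = K(1−μ)/(t+M) when t + M < K. -/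
theorem centralized_comparison_strict (K t M : ℕ) (hK : 3 ≤ K)
    (ht1 : 1 ≤ t) (ht2 : t ≤ K - 2) (hMK : M ≤ K)
    (hMlb : (⌊((K : ℝ) * ((t : ℝ) + 1) * ((K - 1).choose t : ℝ)) /
        (1 + (t : ℝ) * (K.choose (t + 1) : ℝ))⌋₊ : ℝ) - t < M)
    (htM : t + M < K) (μ : ℝ) (hμ : μ = (t : ℝ) / K) :
    (K : ℝ) * (1 - μ) / ((t : ℝ) + M) <
      min ((K : ℝ) * (1 - μ) / M)
        ((1 - μ) / ((t : ℝ) + 1) *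
          (1 / ((K - 1).choose t : ℝ) + (K : ℝ) * t / ((t : ℝ) + 1))) := by
  have hK' : (3:ℝ) ≤ (K:ℝ) := by exact_mod_cast hK
  have ht1' : (1:ℝ) ≤ (t:ℝ) := by exact_mod_cast ht1
  have hCpos : 0 < (K-1).choose t := Nat.choose_pos (by omega)
  have hDpos : 0 < K.choose (t+1) := Nat.choose_pos (by omega)
  set c : ℝ := (((K-1).choose t : ℕ) : ℝ) with hcdef
  set d : ℝ := ((K.choose (t+1) : ℕ) : ℝ) with hddef
  have hc : 1 ≤ c := Nat.one_le_cast.mpr hCpos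
  have hd : 1 ≤ d := Nat.one_le_cast.mpr hDpos
  have hid : (K:ℝ) * c = d * ((t:ℝ)+1) := by
    have h := Nat.add_one_mul_choose_eq (K-1) t
    have hK1 : K - 1 + 1 = K := by omega
    rw [hK1] at h
    rw [hcdef, hddef]
    exact_mod_cast h
  have hden : (0:ℝ) < 1 + (t:ℝ) * d := by nlinarith
  set r : ℝ := (K : ℝ) * ((t : ℝ) + 1) * c / (1 + (t : ℝ) * d) with hrdef
  have hrt : (t:ℝ) < r := by
    rw [hrdef, lt_div_iff₀ hden]
    nlinarith
  have hfl : (t:ℝ) ≤ (⌊r⌋₊ : ℝ) := by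
    exact_mod_cast Nat.le_floor (le_of_lt hrt)
  have hM1 : 1 ≤ M := by
    by_contra hM0
    have : M = 0 := by omega
    rw [this] at hMlb
    push_cast at hMlb
    linarith
  have hM1' : (1:ℝ) ≤ (M:ℝ) := by exact_mod_cast hM1
  have hrtM : r < (t:ℝ) + (M:ℝ) := by
    have h1 : r < (⌊r⌋₊ : ℝ) + 1 := Nat.lt_floor_add_one r
    have h2 : (⌊r⌋₊ : ℝ) < (M:ℝ) + (t:ℝ) := by linarith
    have h3 : ⌊r⌋₊ < M + t := by exact_mod_cast h2
    have h4 : (⌊r⌋₊ : ℝ) + 1 ≤ (M:ℝ) + (t:ℝ) := by exact_mod_cast h3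
    linarith
  have hμpos : 0 < 1 - μ := by
    rw [hμ, sub_pos, div_lt_one (by linarith)]
    have : t < K := by omega
    exact_mod_cast this
  rw [lt_min_iff]
  constructor
  · exact div_lt_div_of_pos_left (by positivity) (by linarith) (by linarith)
  · have hcross : (K : ℝ) * ((t : ℝ) + 1) * c < ((t:ℝ) + (M:ℝ)) * (1 + (t:ℝ) * d) := by
      rw [hrdef, div_lt_iff₀ hden] at hrtM
      linarith
    have hcpos : (0:ℝ) < c := by linarith
    have ht1pos : (0:ℝ) < (t:ℝ) + 1 := by linarith
    have htMpos : (0:ℝ) < (t:ℝ) + (M:ℝ) := by linarith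
    have h2 : (K:ℝ)/((t:ℝ)+(M:ℝ)) < 1/((t:ℝ)+1) * (1/c + (K:ℝ)*(t:ℝ)/((t:ℝ)+1)) := by
      rw [div_lt_iff₀ htMpos]
      have e : (1:ℝ)/((t:ℝ)+1) * (1/c + (K:ℝ)*(t:ℝ)/((t:ℝ)+1))
          = (((t:ℝ)+1) + (K:ℝ)*(t:ℝ)*c)/((((t:ℝ)+1)^2)*c) := by
        rw [eq_div_iff (by positivity)]
        field_simp
      rw [e, div_mul_eq_mul_div, lt_div_iff₀ (by positivity)]
      have hid2 : (t:ℝ)*((t:ℝ)+(M:ℝ))*((K:ℝ)*c) = (t:ℝ)*((t:ℝ)+(M:ℝ))*(d*((t:ℝ)+1)) := by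
        rw [hid]
      nlinarith [mul_lt_mul_of_pos_right hcross ht1pos, hid2]
    calc (K : ℝ) * (1 - μ) / ((t : ℝ) + M) = (1 - μ) * ((K:ℝ)/((t:ℝ)+(M:ℝ))) := by ring
      _ < (1 - μ) * (1/((t:ℝ)+1) * (1/c + (K:ℝ)*(t:ℝ)/((t:ℝ)+1))) :=
          mul_lt_mul_of_pos_left h2 hμpos
      _ = (1 - μ) / ((t : ℝ) + 1) * (1 / c + (K : ℝ) * t / ((t : ℝ) + 1)) := by ring
end
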